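/- arXiv:math/0609774 — 7 statements merged into one kernel-verified Lean document; each statement's English description precedes it below -/
import Mathlib

section
/- Let L be an even lattice of signature (2,n), let D be the exponent of the finite abelian group A_L = L^∨/L, and let r ∈ L be a primitive vector with (r,r) < 0 such that −σ_r maps L into itself and lies in the stable orthogonal group Õ(L). Then either (r,r) = −2D and div(r) = D with D odd, or (r,r) = −D and div(r) = D or div(r) = D/2. -/
/-- The dual lattice `L^∨ = {y ∈ L ⊗ ℚ : (y,l) ∈ ℤ for all l ∈ L}`, viewed inside the
ambient rational vector space `V` (which plays the role of `L ⊗ ℚ`). -/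
def DualSet {V : Type} [AddCommGroup V] [Module ℚ V]
    (B : V →ₗ[ℚ] V →ₗ[ℚ] ℚ) (L : Submodule ℤ V) : Set V :=
  {y : V | ∀ l ∈ L, ∃ a : ℤ, B y l = (a : ℚ)}

/-- `L` is a (full, integral, nondegenerate, symmetric) lattice in the rational vector
space `V` with respect to the bilinear form `B`:  it is finitely generated, spans `V`
over `ℚ`, the form is symmetric, nondegenerate, and `ℤ`-valued on `L`. -/
def IsIntLattice {V : Type} [AddCommGroup V] [Module ℚ V]
    (B : V →ₗ[ℚ] V →ₗ[ℚ] ℚ) (L : Submodule ℤ V) : Prop :=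
  L.FG ∧ Submodule.span ℚ (L : Set V) = ⊤ ∧
    (∀ x y : V, B x y = B y x) ∧
    (∀ x : V, (∀ y : V, B x y = 0) → x = 0) ∧
    (∀ x ∈ L, ∀ y ∈ L, ∃ a : ℤ, B x y = (a : ℚ))

/-- The lattice is even: `(x,x) ∈ 2ℤ` for all `x ∈ L`. -/
def IsEvenLat {V : Type} [AddCommGroup V] [Module ℚ V]
    (B : V →ₗ[ℚ] V →ₗ[ℚ] ℚ) (L : Submodule ℤ V) : Prop :=
  ∀ x ∈ L, ∃ a : ℤ, B x x = 2 * (a : ℚ)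

/-- The form `B` has signature `(2,n)`: it diagonalizes with exactly `2` positive and
`n` negative diagonal entries. -/
def HasSignatureTwo {V : Type} [AddCommGroup V] [Module ℚ V]
    (B : V →ₗ[ℚ] V →ₗ[ℚ] ℚ) (n : ℕ) : Prop :=
  ∃ b : Module.Basis (Fin (2 + n)) ℚ V,
    (∀ i j, i ≠ j → B (b i) (b j) = 0) ∧
    Nat.card {i : Fin (2 + n) // 0 < B (b i) (b i)} = 2 ∧
    Nat.card {i : Fin (2 + n) // B (b i) (b i) < 0} = n

/-- `r` is a primitive vector of `L`: `ℚr ∩ L = ℤr`. -/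
def IsPrimitiveVec {V : Type} [AddCommGroup V] [Module ℚ V]
    (L : Submodule ℤ V) (r : V) : Prop :=
  r ∈ L ∧ ∀ x ∈ L, (∃ q : ℚ, x = q • r) → ∃ a : ℤ, x = a • r

/-- The reflection `σ_r : l ↦ l − (2(l,r)/(r,r))·r` on `V = L ⊗ ℚ`. -/
def reflVec {V : Type} [AddCommGroup V] [Module ℚ V]
    (B : V →ₗ[ℚ] V →ₗ[ℚ] ℚ) (r : V) (l : V) : V :=
  l - (2 * B l r / B r r) • r

/-- `s` is the divisor `div(r)` of `r`: the positive generator of the ideal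
`{(r,l) : l ∈ L} ⊆ ℤ`. -/
def IsDivOf {V : Type} [AddCommGroup V] [Module ℚ V]
    (B : V →ₗ[ℚ] V →ₗ[ℚ] ℚ) (L : Submodule ℤ V) (r : V) (s : ℤ) : Prop :=
  0 < s ∧ (∀ l ∈ L, ∃ a : ℤ, B r l = ((s * a : ℤ) : ℚ)) ∧ ∃ l ∈ L, B r l = (s : ℚ)

/-- `D` is the exponent of the (finite abelian) discriminant group `A_L = L^∨/L`:
the smallest positive integer annihilating `L^∨/L` (characterized by dividing every
positive annihilator). -/
def IsExponentOf {V : Type} [AddCommGroup V] [Module ℚ V]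
    (B : V →ₗ[ℚ] V →ₗ[ℚ] ℚ) (L : Submodule ℤ V) (D : ℤ) : Prop :=
  0 < D ∧ (∀ y ∈ DualSet B L, D • y ∈ L) ∧
    ∀ D' : ℤ, 0 < D' → (∀ y ∈ DualSet B L, D' • y ∈ L) → D ∣ D'

/-!
Write `(r,r) = -2m` with `m > 0`, as `L` is even. Since `-σ_r` preserves `L` and `r` is primitive,
`2(l,r)/(r,r) ∈ ℤ`, so `m` divides `(r,l)` for all `l ∈ L` and hence `m ∣ div(r) = s`. The vector
`r/s` lies in `L^∨`, so `D·r/s ∈ L` and primitivity gives `s ∣ D`. On `L^∨` we have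
`-σ_r - 1 = (2(·,r)/(r,r))·r - 2`, and multiplying by `m` shows that `2m` kills `A_L`, so
`D ∣ 2m`. The chain `m ∣ s ∣ D ∣ 2m` leaves three cases. If `D = m` were even, multiplying
`(-σ_r - 1)(y) ∈ L` by `m/2` would make `(y,r)` even for every `y ∈ L^∨`; then `r/2` lies in
`(L^∨)^∨ = L`, contradicting primitivity.
-/

theorem Int.eq_or_eq_two_mul_of_dvd_of_dvd {m x : ℤ} (hm : 0 < m) (hx : 0 < x) (hmx : m ∣ x)
    (hx2m : x ∣ 2 * m) : x = m ∨ x = 2 * m := by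
  obtain ⟨k, rfl⟩ := hmx
  have hk : k ∣ 2 := (mul_dvd_mul_iff_left hm.ne').mp (by rwa [mul_comm 2 m] at hx2m)
  have hk0 : 0 < k := pos_of_mul_pos_right hx hm.le
  have hk2 : k ≤ 2 := Int.le_of_dvd two_pos hk
  interval_cases k <;> simp [mul_comm]

open LinearMap (BilinForm)

section Lattice

variable {V : Type} [AddCommGroup V] [Module ℚ V]

theorem IsPrimitiveVec.exists_intCast_eq_of_smul_mem {L : Submodule ℤ V} {r : V}
    (hprim : IsPrimitiveVec L r) (hr : r ≠ 0) {q : ℚ} (hq : q • r ∈ L) : ∃ k : ℤ, q = k := by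
  obtain ⟨k, hk⟩ := hprim.2 _ hq ⟨q, rfl⟩
  exact ⟨k, smul_left_injective ℚ hr (by simpa only [Int.cast_smul_eq_zsmul] using hk)⟩

theorem IsPrimitiveVec.inv_two_smul_notMem {L : Submodule ℤ V} {r : V}
    (hprim : IsPrimitiveVec L r) (hr : r ≠ 0) : (2 : ℚ)⁻¹ • r ∉ L := fun h => by
  obtain ⟨k, hk⟩ := hprim.exists_intCast_eq_of_smul_mem hr h
  have : 2 * k = 1 := by exact_mod_cast (by rw [← hk]; norm_num : (2 : ℚ) * k = 1)
  omega

theorem neg_reflVec_sub_self (B : V →ₗ[ℚ] V →ₗ[ℚ] ℚ) (r y : V) :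
    -(reflVec B r y) - y = (2 * B y r / B r r) • r - (2 : ℚ) • y := by
  rw [reflVec, two_smul]
  abel

theorem exists_basis_span_eq_of_fg {L : Submodule ℤ V} (hfg : L.FG)
    (hspan : Submodule.span ℚ (L : Set V) = ⊤) :
    ∃ (ι : Type) (_ : Finite ι) (b : Module.Basis ι ℚ V), Submodule.span ℤ (Set.range b) = L := by
  have : Module.Finite ℤ L := Module.Finite.iff_fg.mpr hfg
  have : IsAddTorsionFree V := IsAddTorsionFree.of_module_rat V
  have : Module.Free ℤ L := Module.free_of_finite_type_torsion_free'
  let b := Module.Free.chooseBasis ℤ L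
  let v := L.subtype ∘ b
  have hspanZ : Submodule.span ℤ (Set.range v) = L := by
    rw [Set.range_comp, ← Submodule.map_span, b.span_eq, Submodule.map_top,
      Submodule.range_subtype]
  have hindQ : LinearIndependent ℚ v :=
    (LinearIndependent.iff_fractionRing ℤ ℚ).mp (b.linearIndependent.map' L.subtype L.ker_subtype)
  have hspanQ : ⊤ ≤ Submodule.span ℚ (Set.range v) := by
    have h := Submodule.span_span_of_tower ℤ ℚ (Set.range v)
    rw [hspanZ, hspan] at h
    exact h.le
  exact ⟨_, inferInstance, Module.Basis.mk hindQ hspanQ, by rw [Module.Basis.coe_mk, hspanZ]⟩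

theorem mem_dualSubmodule_iff_mem_dualSet (B : V →ₗ[ℚ] V →ₗ[ℚ] ℚ) (L : Submodule ℤ V) {x : V} :
    x ∈ BilinForm.dualSubmodule B L ↔ x ∈ DualSet B L := by
  simp only [BilinForm.mem_dualSubmodule, Submodule.mem_one, algebraMap_int_eq, eq_intCast,
    DualSet, Set.mem_ofPred_eq, eq_comm]

theorem IsIntLattice.mem_iff_forall_mem_dualSet {B : V →ₗ[ℚ] V →ₗ[ℚ] ℚ} {L : Submodule ℤ V}
    (hlat : IsIntLattice B L) {x : V} :
    x ∈ L ↔ ∀ y ∈ DualSet B L, ∃ a : ℤ, B x y = a := by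
  obtain ⟨hfg, hspan, hsymm, hnd, -⟩ := hlat
  obtain ⟨ι, _, b, hb⟩ := exists_basis_span_eq_of_fg hfg hspan
  have hB : B.Nondegenerate := ⟨hnd, fun y hy => hnd y fun x => by rw [hsymm]; exact hy x⟩
  have hdual_dual := BilinForm.dualSubmodule_dualSubmodule_of_basis B (R := ℤ) hB ⟨hsymm⟩ b
  rw [hb] at hdual_dual
  conv_lhs => rw [← hdual_dual, BilinForm.mem_dualSubmodule]
  simp only [mem_dualSubmodule_iff_mem_dualSet, Submodule.mem_one,
    algebraMap_int_eq, eq_intCast, eq_comm]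

variable {B : V →ₗ[ℚ] V →ₗ[ℚ] ℚ} {L : Submodule ℤ V} {r : V}

theorem IsDivOf.inv_smul_mem_dualSet {s : ℤ} (hs : IsDivOf B L r s) :
    (s : ℚ)⁻¹ • r ∈ DualSet B L := fun l hl => by
  obtain ⟨a, ha⟩ := hs.2.1 l hl
  refine ⟨a, ?_⟩
  have hs0 : (s : ℚ) ≠ 0 := by exact_mod_cast hs.1.ne'
  rw [map_smul, LinearMap.smul_apply, ha, smul_eq_mul]
  push_cast
  field_simp

theorem IsExponentOf.dvd_of_inv_smul_mem_dualSet {D d : ℤ} (hD : IsExponentOf B L D)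
    (hprim : IsPrimitiveVec L r) (hr : r ≠ 0) (hd : d ≠ 0)
    (h : (d : ℚ)⁻¹ • r ∈ DualSet B L) : d ∣ D := by
  have hmem : ((D : ℚ) / d) • r ∈ L := by
    rw [div_eq_mul_inv, mul_smul, Int.cast_smul_eq_zsmul]
    exact hD.2.1 _ h
  obtain ⟨k, hk⟩ := hprim.exists_intCast_eq_of_smul_mem hr hmem
  have hd' : (d : ℚ) ≠ 0 := by exact_mod_cast hd
  have : (D : ℚ) = d * k := by rw [← hk]; field_simp
  exact ⟨k, by exact_mod_cast this⟩

theorem IsDivOf.dvd_of_neg_reflVec_mem {s a : ℤ} (hs : IsDivOf B L r s)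
    (hsymm : ∀ x y : V, B x y = B y x) (hprim : IsPrimitiveVec L r)
    (hrr : B r r = 2 * a) (ha : a ≠ 0) (hmap : ∀ l ∈ L, -(reflVec B r l) ∈ L) : a ∣ s := by
  obtain ⟨l, hl, hls⟩ := hs.2.2
  have hr : r ≠ 0 := fun h0 => ha (by simpa [h0] using hrr)
  have hmem : (2 * B l r / B r r) • r ∈ L := by
    have h := L.add_mem (hmap l hl) hl
    rwa [reflVec, neg_sub, sub_add_cancel] at h
  obtain ⟨k, hk⟩ := hprim.exists_intCast_eq_of_smul_mem hr hmem
  rw [← hsymm, hls, hrr] at hk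
  have ha' : (a : ℚ) ≠ 0 := by exact_mod_cast ha
  have : (s : ℚ) = a * k := by rw [← hk]; field_simp
  exact ⟨k, by exact_mod_cast this⟩

theorem two_mul_smul_mem_of_neg_reflVec_sub_mem {a : ℤ} (hrL : r ∈ L)
    (hrr : B r r = 2 * a) (ha : a ≠ 0) {y : V} (hy : y ∈ DualSet B L)
    (h : -(reflVec B r y) - y ∈ L) : (2 * a) • y ∈ L := by
  obtain ⟨t, ht⟩ := hy r hrL
  have ha' : (a : ℚ) ≠ 0 := by exact_mod_cast ha
  have key : (2 * a) • y = t • r - a • (-(reflVec B r y) - y) := by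
    rw [neg_reflVec_sub_self, ht, hrr, ← Int.cast_smul_eq_zsmul ℚ, ← Int.cast_smul_eq_zsmul ℚ,
      ← Int.cast_smul_eq_zsmul ℚ]
    match_scalars <;> field_simp
    ring
  rw [key]
  exact L.sub_mem (L.smul_mem t hrL) (L.smul_mem a h)

theorem half_pairing_smul_mem_of_neg_reflVec_sub_mem {a : ℤ} (hrr : B r r = 4 * a)
    (ha : a ≠ 0) {y : V} (h : -(reflVec B r y) - y ∈ L) (hay : (2 * a) • y ∈ L) :
    (B y r / 2) • r ∈ L := by
  have ha' : (a : ℚ) ≠ 0 := by exact_mod_cast ha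
  have key : (B y r / 2) • r = a • (-(reflVec B r y) - y) + (2 * a) • y := by
    rw [neg_reflVec_sub_self, hrr, ← Int.cast_smul_eq_zsmul ℚ, ← Int.cast_smul_eq_zsmul ℚ]
    match_scalars <;> field_simp <;> ring
  rw [key]
  exact L.add_mem (L.smul_mem a h) hay

theorem IsIntLattice.odd_of_isExponentOf (hlat : IsIntLattice B L) {D : ℤ}
    (hD : IsExponentOf B L D) (hprim : IsPrimitiveVec L r) (hrr : B r r = -2 * D)
    (hstab : ∀ y ∈ DualSet B L, -(reflVec B r y) - y ∈ L) : Odd D := by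
  have hr : r ≠ 0 := fun h0 => hD.1.ne' (by simpa [h0] using hrr)
  by_contra hodd
  obtain ⟨a, rfl⟩ := Int.not_odd_iff_even.mp hodd
  have ha : -a ≠ 0 := by have := hD.1; omega
  refine hprim.inv_two_smul_notMem hr (hlat.mem_iff_forall_mem_dualSet.mpr fun y hy => ?_)
  have hay : (2 * -a) • y ∈ L := by
    rw [show 2 * -a = -(a + a) by ring, neg_smul]
    exact L.neg_mem (hD.2.1 y hy)
  have hmem := half_pairing_smul_mem_of_neg_reflVec_sub_mem (by rw [hrr]; push_cast; ring) ha
    (hstab y hy) hay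
  obtain ⟨k, hk⟩ := hprim.exists_intCast_eq_of_smul_mem hr hmem
  exact ⟨k, by rw [map_smul, LinearMap.smul_apply, smul_eq_mul, hlat.2.2.1 r y, ← hk]; ring⟩

end Lattice

theorem minus_reflection_in_stable_orthogonal_group_general
    {V : Type} [AddCommGroup V] [Module ℚ V]
    (B : V →ₗ[ℚ] V →ₗ[ℚ] ℚ) (L : Submodule ℤ V)
    (hlat : IsIntLattice B L) (heven : IsEvenLat B L)
    (D : ℤ) (hD : IsExponentOf B L D)
    (r : V) (hprim : IsPrimitiveVec L r) (hneg : B r r < 0)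
    (s : ℤ) (hs : IsDivOf B L r s)
    (hmap : ∀ l ∈ L, -(reflVec B r l) ∈ L)
    (hstab : ∀ y ∈ DualSet B L, -(reflVec B r y) - y ∈ L) :
    (B r r = ((-2 * D : ℤ) : ℚ) ∧ s = D ∧ Odd D) ∨
    (B r r = ((-D : ℤ) : ℚ) ∧ (s = D ∨ 2 * s = D)) := by
  obtain ⟨a, ha⟩ := heven r hprim.1
  have hm : 0 < -a := by
    have : (a : ℚ) < 0 := by linarith
    have : a < 0 := by exact_mod_cast this
    omega
  have hr : r ≠ 0 := fun h0 => by simp [h0] at hneg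
  have hsD : s ∣ D := hD.dvd_of_inv_smul_mem_dualSet hprim hr hs.1.ne' hs.inv_smul_mem_dualSet
  have hms : -a ∣ s := neg_dvd.mpr (hs.dvd_of_neg_reflVec_mem hlat.2.2.1 hprim ha (by omega) hmap)
  have hDm : D ∣ 2 * -a := hD.2.2 _ (by omega) fun y hy => by
    rw [mul_neg, neg_smul]
    exact L.neg_mem (two_mul_smul_mem_of_neg_reflVec_sub_mem hprim.1 ha (by omega) hy (hstab y hy))
  rcases Int.eq_or_eq_two_mul_of_dvd_of_dvd hm hD.1 (hms.trans hsD) hDm with hD1 | hD2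
  · have hrr : B r r = -2 * D := by rw [ha, hD1]; push_cast; ring
    refine Or.inl ⟨by rw [hrr]; push_cast; ring, Int.dvd_antisymm hs.1.le hD.1.le hsD (hD1 ▸ hms),
      hlat.odd_of_isExponentOf hD hprim hrr hstab⟩
  · refine Or.inr ⟨by rw [ha, hD2]; push_cast; ring, ?_⟩
    rcases Int.eq_or_eq_two_mul_of_dvd_of_dvd hm hs.1 hms (hD2 ▸ hsD) with hs1 | hs2 <;> omega

/-- Let `L` be an even lattice of signature `(2,n)`, `D` the exponent of
`A_L = L^∨/L`, and `r ∈ L` a primitive vector with `(r,r) < 0` such that `−σ_r` maps `L`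
into itself and lies in `Õ(L)`.  Then either `(r,r) = −2D` and `div(r) = D` with `D` odd,
or `(r,r) = −D` and `div(r) = D` or `div(r) = D/2`. -/
theorem minus_reflection_in_stable_orthogonal_group
    {V : Type} [AddCommGroup V] [Module ℚ V]
    (B : V →ₗ[ℚ] V →ₗ[ℚ] ℚ) (L : Submodule ℤ V) (n : ℕ)
    (hlat : IsIntLattice B L) (heven : IsEvenLat B L) (hsig : HasSignatureTwo B n)
    (D : ℤ) (hD : IsExponentOf B L D)
    (r : V) (hprim : IsPrimitiveVec L r) (hneg : B r r < 0)
    (s : ℤ) (hs : IsDivOf B L r s)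
    (hmap : ∀ l ∈ L, -(reflVec B r l) ∈ L)
    (hstab : ∀ y ∈ DualSet B L, -(reflVec B r y) - y ∈ L) :
    (B r r = ((-2 * D : ℤ) : ℚ) ∧ s = D ∧ Odd D) ∨
    (B r r = ((-D : ℤ) : ℚ) ∧ (s = D ∨ 2 * s = D)) :=
  minus_reflection_in_stable_orthogonal_group_general B L hlat heven D hD r hprim hneg s hs hmap
    hstab
end

section
/- Let L be an even lattice, let M ⊆ L be a sublattice on which the restricted bilinear form is nondegenerate, and let M⊥ = {x ∈ L : (x,m) = 0 for all m ∈ M}. For any g ∈ Õ(M), let g̃ be the unique ℚ-linear extension of g to L⊗ℚ which is the identity on M⊥⊗ℚ. Then g̃ maps L bijectively onto L and g̃ ∈ Õ(L); in particular Õ(M) embeds as a subgroup of Õ(L). -/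
/-!
Write `W = M ⊗ ℚ`. As the form is nondegenerate on `W`, `V = W ⊕ W^⊥`, and `W^⊥ = M^⊥ ⊗ ℚ`
because `L` spans `V`. So `g` is an isometry of each summand, hence of `V`, and is bijective.
For `y` in the dual of `M`, writing `y = w + n` with `w ∈ W`, `n ∈ W^⊥` gives `g y - y = g w - w`
with `w` again in the dual of `M`, so `g y - y ∈ M`. Since `L ⊆ L^∨ ⊆ M^∨`, this shows
`g L ⊆ L` and that `g` acts trivially on `A_L`; conversely, if `g x ∈ L` then `x` lies in `M^∨`
(as `(x, m) = (g x, g m)`), so `x = g x - (g x - x) ∈ L`.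
-/

theorem Submodule.le_span_inf_of_span_eq_top
    {R K V : Type*} [CommRing R] [Field K] [Algebra R K] [IsFractionRing R K]
    [AddCommGroup V] [Module R V] [Module K V] [IsScalarTower R K V]
    {L : Submodule R V} (hL : Submodule.span K (L : Set V) = ⊤) (W : Submodule K V) :
    W ≤ Submodule.span K {x | x ∈ L ∧ x ∈ W} := by
  intro x hx
  obtain ⟨⟨t, ht⟩, htx⟩ := multiple_mem_span_of_mem_localization_span (nonZeroDivisors R) K _ x
    (hL ▸ Submodule.mem_top)
  replace htx : t • x ∈ L := by simpa using htx
  have ht' : algebraMap R K t ≠ 0 :=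
    (IsLocalization.map_units K (⟨t, ht⟩ : nonZeroDivisors R)).ne_zero
  have hx' : x = (algebraMap R K t)⁻¹ • t • x := by
    rw [← algebraMap_smul K t x, smul_smul, inv_mul_cancel₀ ht', one_smul]
  rw [hx']
  refine Submodule.smul_mem _ _ (Submodule.subset_span ⟨htx, ?_⟩)
  rw [← algebraMap_smul K t x]
  exact W.smul_mem _ hx

theorem FiniteDimensional.of_fg_of_span_eq_top {R K V : Type*} [CommRing R] [Field K]
    [Algebra R K] [AddCommGroup V] [Module R V] [Module K V] [IsScalarTower R K V]
    {L : Submodule R V} (hfg : L.FG) (hL : Submodule.span K (L : Set V) = ⊤) :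
    FiniteDimensional K V := by
  obtain ⟨s, rfl⟩ := hfg
  rw [Submodule.span_span_of_tower] at hL
  exact ⟨⟨s, hL⟩⟩

theorem LinearMap.eq_of_eqOn_span₂ {R M N : Type*} [CommSemiring R] [AddCommMonoid M]
    [Module R M] [AddCommMonoid N] [Module R N] {f f' : M →ₗ[R] M →ₗ[R] N} {s : Set M}
    (h : ∀ x ∈ s, ∀ y ∈ s, f x y = f' x y) {x y : M}
    (hx : x ∈ Submodule.span R s) (hy : y ∈ Submodule.span R s) : f x y = f' x y := by
  induction hx, hy using Submodule.span_induction₂ with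
  | mem_mem x y hx hy => exact h x hx y hy
  | zero_left | zero_right => simp
  | add_left | add_right | smul_left | smul_right => simp_all

theorem LinearMap.IsOrthogonal.injective {R M : Type*} [CommRing R] [AddCommGroup M] [Module R M]
    {B : LinearMap.BilinForm R M} {g : M →ₗ[R] M} (hg : B.IsOrthogonal g)
    (hB : B.SeparatingLeft) : Function.Injective g := by
  refine (injective_iff_map_eq_zero g).2 fun x hx => hB x fun y => ?_
  rw [← hg x y, hx, LinearMap.map_zero₂]

namespace LinearMap.BilinForm

variable {R M : Type*} [CommRing R] [AddCommGroup M] [Module R M]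
  {B : LinearMap.BilinForm R M} {W : Submodule R M} {g : M →ₗ[R] M}

theorem isOrthogonal_of_isCompl_orthogonal (hB : B.IsRefl) (hW : IsCompl W (B.orthogonal W))
    (hgW : ∀ w ∈ W, g w ∈ W) (hiso : ∀ x ∈ W, ∀ y ∈ W, B (g x) (g y) = B x y)
    (hfix : ∀ n ∈ B.orthogonal W, g n = n) : B.IsOrthogonal g := by
  have ortho : ∀ w ∈ W, ∀ n ∈ B.orthogonal W, B w n = 0 ∧ B n w = 0 :=
    fun w hw n hn => ⟨hn w hw, hB _ _ (hn w hw)⟩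
  intro x y
  obtain ⟨w₁, hw₁, n₁, hn₁, rfl⟩ := Submodule.mem_sup.1 (hW.sup_eq_top ▸ Submodule.mem_top :
    x ∈ W ⊔ B.orthogonal W)
  obtain ⟨w₂, hw₂, n₂, hn₂, rfl⟩ := Submodule.mem_sup.1 (hW.sup_eq_top ▸ Submodule.mem_top :
    y ∈ W ⊔ B.orthogonal W)
  simp only [map_add, LinearMap.add_apply, hfix _ hn₁, hfix _ hn₂, hiso _ hw₁ _ hw₂,
    (ortho _ hw₁ _ hn₂).1, (ortho _ (hgW _ hw₁) _ hn₂).1, (ortho _ hw₂ _ hn₁).2,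
    (ortho _ (hgW _ hw₂) _ hn₁).2]

end LinearMap.BilinForm

section Lattice

variable {V : Type} [AddCommGroup V] [Module ℚ V] {B : LinearMap.BilinForm ℚ V}
  {L M : Submodule ℤ V} {g : V →ₗ[ℚ] V}

theorem sub_mem_of_mem_dualSet (hB : B.IsRefl)
    (hM : IsCompl (Submodule.span ℚ (M : Set V)) (B.orthogonal (Submodule.span ℚ (M : Set V))))
    (hfix : ∀ n ∈ B.orthogonal (Submodule.span ℚ (M : Set V)), g n = n)
    (hstab : ∀ y ∈ Submodule.span ℚ (M : Set V), y ∈ DualSet B M → g y - y ∈ M)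
    {x : V} (hx : x ∈ DualSet B M) : g x - x ∈ M := by
  obtain ⟨w, hw, n, hn, rfl⟩ := Submodule.mem_sup.1 (hM.sup_eq_top ▸ Submodule.mem_top :
    x ∈ _ ⊔ _)
  have hgwn : g (w + n) - (w + n) = g w - w := by rw [map_add, hfix n hn]; abel
  rw [hgwn]
  refine hstab w hw fun m hm => ?_
  have hnm : B n m = 0 := hB _ _ (hn m (Submodule.subset_span hm))
  simpa [hnm] using hx m hm

theorem bijOn_of_isOrthogonal (hL : ∀ x ∈ L, x ∈ DualSet B L) (hML : M ≤ L)
    (hgM : Set.MapsTo g M M) (hg : B.IsOrthogonal g) (hbij : Function.Bijective g)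
    (hdual : ∀ x ∈ DualSet B M, g x - x ∈ M) : Set.BijOn g L L := by
  have hLM : ∀ x ∈ L, x ∈ DualSet B M := fun x hx m hm => hL x hx m (hML hm)
  refine ⟨fun l hl => ?_, hbij.1.injOn, fun l hl => ?_⟩
  · simpa using L.add_mem (hML (hdual l (hLM l hl))) hl
  · obtain ⟨x, rfl⟩ := hbij.2 l
    have hx : x ∈ DualSet B M := fun m hm => by
      rw [← hg x m]
      exact hL _ hl _ (hML (hgM hm))
    exact ⟨x, by simpa using L.sub_mem hl (hML (hdual x hx)), rfl⟩

end Lattice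

theorem stable_orthogonal_group_of_sublattice_embeds_general
    {V : Type} [AddCommGroup V] [Module ℚ V]
    (B : V →ₗ[ℚ] V →ₗ[ℚ] ℚ) (L M : Submodule ℤ V)
    (hlat : IsIntLattice B L) (hML : M ≤ L)
    -- the restricted form on `M` is nondegenerate:
    (hMnd : ∀ x ∈ Submodule.span ℚ (M : Set V),
      (∀ y ∈ Submodule.span ℚ (M : Set V), B x y = 0) → x = 0)
    (g : V →ₗ[ℚ] V)
    -- `g` is the identity on `M⊥ ⊗ ℚ`:
    (hfix : ∀ x ∈ Submodule.span ℚ {x : V | x ∈ L ∧ ∀ m' ∈ M, B x m' = 0}, g x = x)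
    -- `g` restricts to an isometry of `M` onto itself:
    (hbij : Set.BijOn g (M : Set V) (M : Set V))
    (hiso : ∀ x ∈ M, ∀ y ∈ M, B (g x) (g y) = B x y)
    -- which acts trivially on the discriminant group of `M`, i.e. `g ∈ Õ(M)`:
    (hstab : ∀ y ∈ Submodule.span ℚ (M : Set V),
      (∀ m' ∈ M, ∃ a : ℤ, B y m' = (a : ℚ)) → g y - y ∈ M) :
    Set.BijOn g (L : Set V) (L : Set V) ∧
      (∀ x ∈ L, ∀ y ∈ L, B (g x) (g y) = B x y) ∧
      (∀ y ∈ DualSet B L, g y - y ∈ L) := by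
  obtain ⟨hfg, hspan, hsymm, hnd, hint⟩ := hlat
  have : FiniteDimensional ℚ V := .of_fg_of_span_eq_top hfg hspan
  have hBsymm : LinearMap.BilinForm.IsSymm B := LinearMap.BilinForm.isSymm_def.2 hsymm
  set W := Submodule.span ℚ (M : Set V)
  have hW : IsCompl W (LinearMap.BilinForm.orthogonal B W) :=
    LinearMap.BilinForm.isCompl_orthogonal_of_restrict_nondegenerate hBsymm.isRefl <|
      ((hBsymm.restrict W).isRefl.nondegenerate_iff_separatingLeft).2 fun x hx =>
        Subtype.ext (hMnd x x.2 fun y hy => hx ⟨y, hy⟩)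
  have hfixW : ∀ n ∈ LinearMap.BilinForm.orthogonal B W, g n = n := by
    intro n hn
    refine hfix n (Submodule.span_mono ?_ (Submodule.le_span_inf_of_span_eq_top hspan _ hn))
    exact fun x hx => ⟨hx.1, fun m hm => hBsymm.isRefl _ _ (hx.2 m (Submodule.subset_span hm))⟩
  have hgW : ∀ w ∈ W, g w ∈ W := fun w hw =>
    (Submodule.span_le (p := W.comap g)).2 (fun m hm => Submodule.subset_span (hbij.mapsTo hm)) hw
  have hg : B.IsOrthogonal g :=
    LinearMap.BilinForm.isOrthogonal_of_isCompl_orthogonal hBsymm.isRefl hW hgW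
      (fun x hx y hy => LinearMap.eq_of_eqOn_span₂ (f := B.compl₁₂ g g) hiso hx hy) hfixW
  have hdual : ∀ x ∈ DualSet B M, g x - x ∈ M := fun x =>
    sub_mem_of_mem_dualSet hBsymm.isRefl hW hfixW hstab
  have hinj : Function.Injective g := hg.injective hnd
  exact ⟨bijOn_of_isOrthogonal hint hML hbij.mapsTo hg
      ⟨hinj, LinearMap.injective_iff_surjective.1 hinj⟩ hdual,
    fun x _ y _ => hg x y, fun y hy => hML (hdual y fun m hm => hy m (hML hm))⟩

/-- Let `L` be an even lattice, `M ⊆ L` a sublattice on which the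
restricted form is nondegenerate, and `M⊥ = {x ∈ L : (x,m) = 0 for all m ∈ M}`.
If `g : V → V` is the (unique) `ℚ`-linear extension of an element of `Õ(M)` which is the
identity on `M⊥ ⊗ ℚ`, then `g` maps `L` bijectively onto `L` and `g ∈ Õ(L)`; in
particular `Õ(M)` embeds as a subgroup of `Õ(L)`. -/
theorem stable_orthogonal_group_of_sublattice_embeds
    {V : Type} [AddCommGroup V] [Module ℚ V]
    (B : V →ₗ[ℚ] V →ₗ[ℚ] ℚ) (L M : Submodule ℤ V)
    (hlat : IsIntLattice B L) (heven : IsEvenLat B L) (hML : M ≤ L)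
    -- the restricted form on `M` is nondegenerate:
    (hMnd : ∀ x ∈ Submodule.span ℚ (M : Set V),
      (∀ y ∈ Submodule.span ℚ (M : Set V), B x y = 0) → x = 0)
    (g : V →ₗ[ℚ] V)
    -- `g` is the identity on `M⊥ ⊗ ℚ`:
    (hfix : ∀ x ∈ Submodule.span ℚ {x : V | x ∈ L ∧ ∀ m' ∈ M, B x m' = 0}, g x = x)
    -- `g` restricts to an isometry of `M` onto itself:
    (hbij : Set.BijOn g (M : Set V) (M : Set V))
    (hiso : ∀ x ∈ M, ∀ y ∈ M, B (g x) (g y) = B x y)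
    -- which acts trivially on the discriminant group of `M`, i.e. `g ∈ Õ(M)`:
    (hstab : ∀ y ∈ Submodule.span ℚ (M : Set V),
      (∀ m' ∈ M, ∃ a : ℤ, B y m' = (a : ℚ)) → g y - y ∈ M) :
    Set.BijOn g (L : Set V) (L : Set V) ∧
      (∀ x ∈ L, ∀ y ∈ L, B (g x) (g y) = B x y) ∧
      (∀ y ∈ DualSet B L, g y - y ∈ L) :=
  stable_orthogonal_group_of_sublattice_embeds_general B L M hlat hML hMnd g hfix hbij hiso hstab
end

section
/- Let m ≥ 0 and d ≥ 1 be integers and let L = L_{2d}^{(m)} = 2U ⊕ mE8(−1) ⊕ ⟨−2d⟩. Every primitive vector r ∈ L with (r,r) = −2 has div(r) = 1 or div(r) = 2. Moreover, there exists a primitive vector r ∈ L with (r,r) = −2 and div(r) = 2 if and only if d ≡ 1 (mod 4). -/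
/-- The hyperbolic plane `U`, with Gram matrix `[[0,1],[1,0]]`. -/
def gramU : Matrix (Fin 2) (Fin 2) ℤ := !![0, 1; 1, 0]

/-- The Gram matrix of `E₈(−1)`: the negated Cartan (= Gram) matrix of the `E₈` root
lattice. -/
def gramE8neg : Matrix (Fin 8) (Fin 8) ℤ := -CartanMatrix.E₈

/-- The Gram matrix of `m` orthogonal copies of `E₈(−1)`. -/
def gramE8copies (m : ℕ) : Matrix (Fin m × Fin 8) (Fin m × Fin 8) ℤ :=
  Matrix.of fun p q => if p.1 = q.1 then gramE8neg p.2 q.2 else 0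

/-- Index set for `II_{2,8m+2} = 2U ⊕ mE₈(−1)`. -/
abbrev IdxII (m : ℕ) : Type := (Fin 2 ⊕ Fin 2) ⊕ Fin m × Fin 8

/-- The Gram matrix of the even unimodular lattice `II_{2,8m+2} = 2U ⊕ mE₈(−1)`. -/
def gramII (m : ℕ) : Matrix (IdxII m) (IdxII m) ℤ :=
  Matrix.fromBlocks (Matrix.fromBlocks gramU 0 0 gramU) 0 0 (gramE8copies m)

/-- Index set for `L_{2d}^{(m)} = 2U ⊕ mE₈(−1) ⊕ ⟨−2d⟩`. -/
abbrev IdxL (m : ℕ) : Type := IdxII m ⊕ Fin 1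

/-- The Gram matrix of `L_{2d}^{(m)} = 2U ⊕ mE₈(−1) ⊕ ⟨−2d⟩`. -/
def gramL (m d : ℕ) : Matrix (IdxL m) (IdxL m) ℤ :=
  Matrix.fromBlocks (gramII m) 0 0 !![-(2 * (d : ℤ))]

/-- The bilinear form on `ι → ℤ` associated to a Gram matrix `G`:
`⟨x, y⟩ = ∑ i j, x i * G i j * y j`. -/
def bilin {ι : Type} [Fintype ι] (G : Matrix ι ι ℤ) (x y : ι → ℤ) : ℤ :=
  ∑ i, ∑ j, x i * G i j * y j

/-- `r` is primitive: `ℚr ∩ L = ℤr`, equivalently `r` is not a nontrivial integer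
multiple of a lattice vector. -/
def IsPrim {ι : Type} (r : ι → ℤ) : Prop :=
  ∀ (k : ℤ) (x : ι → ℤ), r = k • x → IsUnit k

/-- `s = div(r)`: the positive generator of the ideal `{(r,l) : l ∈ L} ⊆ ℤ`. -/
def IsDivisorOf {ι : Type} [Fintype ι] (G : Matrix ι ι ℤ) (r : ι → ℤ) (s : ℤ) : Prop :=
  0 < s ∧ (∀ l : ι → ℤ, s ∣ bilin G r l) ∧ ∃ l : ι → ℤ, bilin G r l = s

/-- Two lattices, given as `ℤ`-modules with `ℤ`-valued bilinear forms, are isometric. -/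
def LatIsometric {M N : Type} [AddCommGroup M] [Module ℤ M] [AddCommGroup N] [Module ℤ N]
    (BM : M → M → ℤ) (BN : N → N → ℤ) : Prop :=
  ∃ e : M ≃ₗ[ℤ] N, ∀ x y : M, BN (e x) (e y) = BM x y

/-- The orthogonal complement `K_r = {x : (x,r) = 0}` of `r`, as a `ℤ`-submodule. -/
def orthC {ι : Type} [Fintype ι] (G : Matrix ι ι ℤ) (r : ι → ℤ) :
    Submodule ℤ (ι → ℤ) where
  carrier := {x | bilin G x r = 0}
  zero_mem' := by simp [bilin]
  add_mem' := by
    intro a b ha hb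
    simp only [Set.mem_setOf_eq, bilin, Pi.add_apply, add_mul, Finset.sum_add_distrib] at *
    rw [ha, hb, add_zero]
  smul_mem' := by
    intro c x hx
    simp only [Set.mem_setOf_eq, bilin, Pi.smul_apply, smul_eq_mul, mul_assoc,
      ← Finset.mul_sum] at *
    rw [hx, mul_zero]

/-! If `div(r) = 2`, then `(r, x)` is even for every `x` in the unimodular summand
`II = 2U ⊕ mE₈(−1)`, so the `II`-component of `r` is `2z`, and primitivity forces the
`⟨−2d⟩`-coordinate `w` of `r` to be odd. As `II` is even,
`−2 = (r,r) = 4(z,z) − 2dw² ≡ −2d (mod 8)`, i.e. `d ≡ 1 (mod 4)`. Conversely, for `d = 4k + 1`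
the vector `r = 2(ke + f) + ℓ`, with `e, f` the standard basis of the first `U` and `ℓ` the
generator of `⟨−2d⟩`, has `(r,r) = 8k − 2d = −2` and `(r, e) = 2`. The bound `div(r) ≤ 2` is
just `div(r) ∣ (r,r)`. -/

open Matrix
open scoped Kronecker

section Primitive

variable {ι : Type} {r : ι → ℤ}

lemma IsPrim.isUnit_of_forall_dvd (hr : IsPrim r) {n : ℤ} (h : ∀ i, n ∣ r i) : IsUnit n := by
  choose x hx using h
  exact hr n x (funext hx)

lemma isPrim_of_apply_eq_one {i : ι} (h : r i = 1) : IsPrim r :=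
  fun _ x hx => IsUnit.of_mul_eq_one (x i) (h ▸ (congrFun hx i)).symm

end Primitive

section Bilin

variable {ι κ : Type} [Fintype ι] [Fintype κ]

lemma bilin_eq_dotProduct_mulVec (G : Matrix ι ι ℤ) (x y : ι → ℤ) :
    bilin G x y = x ⬝ᵥ G *ᵥ y := by
  simp only [bilin, dotProduct, mulVec, Finset.mul_sum, mul_assoc]

@[simp]
lemma bilin_zero_left (G : Matrix ι ι ℤ) (y : ι → ℤ) : bilin G 0 y = 0 := by
  simp [bilin]

lemma bilin_smul_left (G : Matrix ι ι ℤ) (c : ℤ) (x y : ι → ℤ) :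
    bilin G (c • x) y = c * bilin G x y := by
  simp only [bilin_eq_dotProduct_mulVec, smul_dotProduct, smul_eq_mul]

lemma bilin_smul_right (G : Matrix ι ι ℤ) (c : ℤ) (x y : ι → ℤ) :
    bilin G x (c • y) = c * bilin G x y := by
  simp only [bilin_eq_dotProduct_mulVec, mulVec_smul, dotProduct_smul, smul_eq_mul]

lemma bilin_fromBlocks (A : Matrix ι ι ℤ) (D : Matrix κ κ ℤ) (x y : ι ⊕ κ → ℤ) :
    bilin (fromBlocks A 0 0 D) x y =
      bilin A (x ∘ Sum.inl) (y ∘ Sum.inl) + bilin D (x ∘ Sum.inr) (y ∘ Sum.inr) := by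
  simp [bilin, Fintype.sum_sum_type]

lemma bilin_of_fin_one (c : ℤ) (x y : Fin 1 → ℤ) : bilin !![c] x y = x 0 * c * y 0 := by
  simp [bilin]

lemma bilin_transpose_apply_of_mul_eq_one [DecidableEq ι] {G H : Matrix ι ι ℤ}
    (hGH : G * H = 1) (x : ι → ℤ) (i : ι) : bilin G x (Hᵀ i) = x i := by
  have : G *ᵥ Hᵀ i = Pi.single i 1 := by
    ext j
    simpa [mulVec, dotProduct, Matrix.mul_apply, Matrix.one_apply, Pi.single_apply, eq_comm]
      using congrFun (congrFun hGH j) i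
  rw [bilin_eq_dotProduct_mulVec, this, dotProduct_single_one]

lemma dvd_apply_of_forall_dvd_bilin [DecidableEq ι] {G : Matrix ι ι ℤ} (hG : IsUnit G)
    {n : ℤ} {x : ι → ℤ} (h : ∀ l, n ∣ bilin G x l) (i : ι) : n ∣ x i := by
  obtain ⟨H, hGH⟩ := hG.exists_right_inv
  simpa [bilin_transpose_apply_of_mul_eq_one hGH] using h (Hᵀ i)

lemma even_bilin_self_of_isSymm {G : Matrix ι ι ℤ} (hG : G.IsSymm)
    (hdiag : ∀ i, Even (G i i)) (x : ι → ℤ) : Even (bilin G x x) := by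
  rw [← ZMod.intCast_eq_zero_iff_even, bilin]
  push_cast
  rw [← Finset.sum_product']
  refine Finset.sum_involution (fun p _ => p.swap) (fun p _ => ?_) (fun p _ hp => ?_)
    (by simp) (by simp)
  · rw [Prod.fst_swap, Prod.snd_swap, hG.apply p.1 p.2]
    linear_combination (x p.1 * G p.1 p.2 * x p.2 : ZMod 2) * ZMod.natCast_self 2
  · rintro hswap
    obtain ⟨i, j⟩ := p
    obtain rfl : i = j := congrArg Prod.snd hswap
    exact hp (by simp [(hdiag i).intCast_zmod_two])

lemma IsDivisorOf.eq_one_or_eq_two_of_bilin_self_eq_neg_two {G : Matrix ι ι ℤ} {r : ι → ℤ}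
    {s : ℤ} (hs : IsDivisorOf G r s) (hrr : bilin G r r = -2) : s = 1 ∨ s = 2 := by
  have := Int.le_of_dvd two_pos (dvd_neg.mp (hrr ▸ hs.2.1 r))
  have := hs.1
  omega

lemma emod_four_eq_one_of_isDivisorOf_two [DecidableEq ι] {G : Matrix ι ι ℤ} (hG : IsUnit G)
    (heven : ∀ x, Even (bilin G x x)) {d : ℤ} {r : ι ⊕ Fin 1 → ℤ} (hr : IsPrim r)
    (hrr : bilin (fromBlocks G 0 0 !![-(2 * d)]) r r = -2)
    (hdiv : IsDivisorOf (fromBlocks G 0 0 !![-(2 * d)]) r 2) : d % 4 = 1 := by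
  have hdvd : ∀ i, 2 ∣ (r ∘ Sum.inl) i := dvd_apply_of_forall_dvd_bilin hG fun l => by
    simpa [bilin_fromBlocks, bilin_of_fin_one] using hdiv.2.1 (Sum.elim l 0)
  have hw : Odd (r (Sum.inr 0)) := by
    refine Int.not_even_iff_odd.mp fun hw => ?_
    have := Int.isUnit_iff.mp <| hr.isUnit_of_forall_dvd <| by
      rintro (i | i)
      · exact hdvd i
      · exact Subsingleton.elim i 0 ▸ hw.two_dvd
    omega
  choose z hz using hdvd
  obtain ⟨t, ht⟩ := heven z
  obtain ⟨u, hu⟩ := hw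
  have hrz : r ∘ Sum.inl = (2 : ℤ) • z := funext hz
  rw [bilin_fromBlocks, bilin_of_fin_one, hrz, bilin_smul_left, bilin_smul_right, ht,
    Function.comp_apply, hu] at hrr
  have key : 8 * t - 8 * (d * (u * u + u)) - 2 * d = -2 := by linear_combination hrr
  generalize d * (u * u + u) = X at key
  omega

lemma exists_isPrim_isDivisorOf_two {G : Matrix ι ι ℤ} {d : ℤ}
    {u v : ι → ℤ} (huu : 2 * bilin G u u = d - 1) (huv : bilin G u v = 1) :
    ∃ r : ι ⊕ Fin 1 → ℤ, IsPrim r ∧ bilin (fromBlocks G 0 0 !![-(2 * d)]) r r = -2 ∧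
      IsDivisorOf (fromBlocks G 0 0 !![-(2 * d)]) r 2 := by
  refine ⟨Sum.elim ((2 : ℤ) • u) 1, isPrim_of_apply_eq_one (i := Sum.inr 0) rfl, ?_,
    two_pos, fun l => ⟨bilin G u (l ∘ Sum.inl) - d * l (Sum.inr 0), ?_⟩, Sum.elim v 0, ?_⟩ <;>
  simp only [bilin_fromBlocks, bilin_of_fin_one, Sum.elim_comp_inl, Sum.elim_comp_inr,
    bilin_smul_left, bilin_smul_right, Pi.one_apply, Function.comp_apply, Pi.zero_apply, huv]
  · linear_combination 2 * huu
  · ring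
  · ring

end Bilin

def gramE8negInv : Matrix (Fin 8) (Fin 8) ℤ :=
  -!![4, 5, 7, 10, 8, 6, 4, 2; 5, 8, 10, 15, 12, 9, 6, 3; 7, 10, 14, 20, 16, 12, 8, 4;
     10, 15, 20, 30, 24, 18, 12, 6; 8, 12, 16, 24, 20, 15, 10, 5; 6, 9, 12, 18, 15, 12, 8, 4;
     4, 6, 8, 12, 10, 8, 6, 3; 2, 3, 4, 6, 5, 4, 3, 2]

lemma gramE8neg_mul_gramE8negInv : gramE8neg * gramE8negInv = 1 := by decide

lemma gramE8copies_eq_one_kronecker (m : ℕ) :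
    gramE8copies m = (1 : Matrix (Fin m) (Fin m) ℤ) ⊗ₖ gramE8neg := by
  ext ⟨k, s⟩ ⟨k', t⟩
  simp [gramE8copies, Matrix.one_apply, ite_mul]

lemma isUnit_gramII (m : ℕ) : IsUnit (gramII m) := by
  have hU : IsUnit gramU := IsUnit.of_mul_eq_one gramU (by decide)
  have hE : IsUnit (gramE8copies m) := by
    refine IsUnit.of_mul_eq_one ((1 : Matrix (Fin m) (Fin m) ℤ) ⊗ₖ gramE8negInv) ?_
    rw [gramE8copies_eq_one_kronecker, ← mul_kronecker_mul, one_mul,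
      gramE8neg_mul_gramE8negInv, one_kronecker_one]
  simp [gramII, hU, hE]

lemma isSymm_gramII (m : ℕ) : (gramII m).IsSymm := by
  have hU : gramU.IsSymm := by decide
  have hE : gramE8neg.IsSymm := by decide
  refine .fromBlocks (.fromBlocks hU (by simp) hU) (by simp) ?_
  rw [gramE8copies_eq_one_kronecker, IsSymm, ← kroneckerMap_transpose, transpose_one, hE]

lemma even_gramII_apply_self (m : ℕ) (i : IdxII m) : Even (gramII m i i) := by
  rcases i with ((i | i) | ⟨k, t⟩)
  · fin_cases i <;> simp [gramII, gramU]
  · fin_cases i <;> simp [gramII, gramU]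
  · have : ∀ t, Even (gramE8neg t t) := by decide
    simpa [gramII, gramE8copies] using this t

lemma bilin_gramU (x y : Fin 2 → ℤ) : bilin gramU x y = x 0 * y 1 + x 1 * y 0 := by
  simp [bilin, gramU, Fin.sum_univ_two]

lemma exists_bilin_gramII_eq (m : ℕ) (k : ℤ) :
    ∃ u v : IdxII m → ℤ, bilin (gramII m) u u = 2 * k ∧ bilin (gramII m) u v = 1 := by
  refine ⟨Sum.elim (Sum.elim ![k, 1] 0) 0, Sum.elim (Sum.elim ![1, 0] 0) 0, ?_, ?_⟩ <;>
  simp [gramII, bilin_fromBlocks, bilin_gramU, two_mul]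

theorem divisors_of_minus_two_vectors_in_L2d_general
    (m d : ℕ) :
    (∀ r : IdxL m → ℤ, IsPrim r → bilin (gramL m d) r r = -2 →
      ∀ s : ℤ, IsDivisorOf (gramL m d) r s → s = 1 ∨ s = 2) ∧
    ((∃ r : IdxL m → ℤ, IsPrim r ∧ bilin (gramL m d) r r = -2 ∧
        IsDivisorOf (gramL m d) r 2) ↔ d % 4 = 1) := by
  refine ⟨fun r _ hrr s hs => hs.eq_one_or_eq_two_of_bilin_self_eq_neg_two hrr,
    fun ⟨r, hr, hrr, hdiv⟩ => ?_, fun hd => ?_⟩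
  · have := emod_four_eq_one_of_isDivisorOf_two (isUnit_gramII m)
      (even_bilin_self_of_isSymm (isSymm_gramII m) (even_gramII_apply_self m)) hr hrr hdiv
    omega
  · obtain ⟨u, v, huu, huv⟩ := exists_bilin_gramII_eq m (d / 4 : ℕ)
    exact exists_isPrim_isDivisorOf_two (by omega) huv

/-- In `L = L_{2d}^{(m)} = 2U ⊕ mE₈(−1) ⊕ ⟨−2d⟩`, every primitive
vector `r` with `(r,r) = −2` has `div(r) = 1` or `div(r) = 2`; moreover there exists a
primitive vector `r` with `(r,r) = −2` and `div(r) = 2` if and only if `d ≡ 1 mod 4`. -/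
theorem divisors_of_minus_two_vectors_in_L2d
    (m d : ℕ) (hd : 1 ≤ d) :
    (∀ r : IdxL m → ℤ, IsPrim r → bilin (gramL m d) r r = -2 →
      ∀ s : ℤ, IsDivisorOf (gramL m d) r s → s = 1 ∨ s = 2) ∧
    ((∃ r : IdxL m → ℤ, IsPrim r ∧ bilin (gramL m d) r r = -2 ∧
        IsDivisorOf (gramL m d) r 2) ↔ d % 4 = 1) :=
  divisors_of_minus_two_vectors_in_L2d_general m d
end

section
/- For every integer d ≥ 1, the number of residue classes x modulo 2d satisfying x² ≡ 1 (mod 4d) is exactly 2^{ρ(d)}, where ρ(d) is the number of distinct prime divisors of d. (Note that for x ∈ ℤ/2dℤ the residue of x² modulo 4d is well defined.) -/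
/-!
An odd residue `x` can be written `x = 2e - 1`, and then `x² - 1 = 4 (e² - e)`. Hence
`x ↦ e` identifies the classes `x` modulo `2d` with `x² ≡ 1 (mod 4d)` with the idempotents
`e` of `ZMod d`. By the Chinese remainder theorem the idempotents of `ZMod d` are the tuples
of idempotents of the `ZMod (p ^ k)`, and since `e` and `e - 1` are coprime these are only
`0` and `1`.
-/

theorem Prod.isIdempotentElem_iff {M N : Type*} [Mul M] [Mul N] {x : M × N} :
    IsIdempotentElem x ↔ IsIdempotentElem x.1 ∧ IsIdempotentElem x.2 :=
  Prod.ext_iff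

theorem MulEquiv.card_isIdempotentElem {M N : Type*} [Mul M] [Mul N] (f : M ≃* N) :
    Nat.card {x : M // IsIdempotentElem x} = Nat.card {y : N // IsIdempotentElem y} :=
  Nat.card_congr <| f.toEquiv.subtypeEquiv fun x =>
    ⟨fun h => h.map f, fun h => by simpa using h.map f.symm⟩

theorem Prod.card_isIdempotentElem (M N : Type*) [Mul M] [Mul N] :
    Nat.card {x : M × N // IsIdempotentElem x} =
      Nat.card {x : M // IsIdempotentElem x} * Nat.card {y : N // IsIdempotentElem y} := by
  rw [← Nat.card_prod]
  exact Nat.card_congr <|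
    (Equiv.subtypeEquivRight fun _ => Prod.isIdempotentElem_iff).trans
      (Equiv.subtypeProdEquivProd ..)

theorem Int.four_mul_dvd_sq_sub_one_iff_of_modEq {d a b : ℤ} (h : a ≡ b [ZMOD 2 * d]) :
    4 * d ∣ a ^ 2 - 1 ↔ 4 * d ∣ b ^ 2 - 1 := by
  obtain ⟨k, hk⟩ := h.dvd
  rw [show b ^ 2 - 1 = a ^ 2 - 1 + 4 * d * (k * a + d * k ^ 2) by
    rw [show b = a + 2 * d * k by linarith]; ring, dvd_add_left (dvd_mul_right _ _)]

theorem Int.four_mul_dvd_two_mul_sub_one_sq_sub_one_iff {d t : ℤ} :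
    4 * d ∣ (2 * t - 1) ^ 2 - 1 ↔ d ∣ t * (t - 1) := by
  rw [show (2 * t - 1) ^ 2 - 1 = 4 * (t * (t - 1)) by ring]
  exact mul_dvd_mul_iff_left four_ne_zero

namespace ZMod

theorem isIdempotentElem_intCast_iff {n : ℕ} {t : ℤ} :
    IsIdempotentElem (t : ZMod n) ↔ (n : ℤ) ∣ t * (t - 1) := by
  rw [IsIdempotentElem, ← sub_eq_zero, ← intCast_zmod_eq_zero_iff_dvd]
  push_cast
  ring_nf

theorem card_isIdempotentElem_mul {m n : ℕ} (h : m.Coprime n) :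
    Nat.card {e : ZMod (m * n) // IsIdempotentElem e} =
      Nat.card {e : ZMod m // IsIdempotentElem e} * Nat.card {e : ZMod n // IsIdempotentElem e} :=
  (chineseRemainder h).toMulEquiv.card_isIdempotentElem.trans (Prod.card_isIdempotentElem _ _)

theorem isIdempotentElem_iff_of_prime_pow {p k : ℕ} (hp : p.Prime) {e : ZMod (p ^ k)} :
    IsIdempotentElem e ↔ e = 0 ∨ e = 1 := by
  refine ⟨fun he => ?_, fun he => he.elim (· ▸ .zero) (· ▸ .one)⟩
  have hp' : Prime (p : ℤ) := Nat.prime_iff_prime_int.mp hp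
  obtain ⟨t, rfl⟩ : ∃ t : ℤ, (t : ZMod (p ^ k)) = e := ⟨e.cast, intCast_zmod_cast e⟩
  have hdvd : (p : ℤ) ^ k ∣ t * (t - 1) := by exact_mod_cast isIdempotentElem_intCast_iff.mp he
  rw [intCast_zmod_eq_zero_iff_dvd, ← Int.cast_one, intCast_eq_intCast_iff_dvd_sub]
  push_cast
  by_cases hpt : (p : ℤ) ∣ t
  · have hpt' : ¬(p : ℤ) ∣ t - 1 := fun h => hp'.not_dvd_one (by simpa using dvd_sub hpt h)
    exact .inl (hp'.pow_dvd_of_dvd_mul_right k hpt' hdvd)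
  · exact .inr (by simpa [dvd_sub_comm] using hp'.pow_dvd_of_dvd_mul_left k hpt hdvd)

theorem card_isIdempotentElem_prime_pow {p k : ℕ} (hp : p.Prime) (hk : k ≠ 0) :
    Nat.card {e : ZMod (p ^ k) // IsIdempotentElem e} = 2 := by
  have : Fact (1 < p ^ k) := ⟨Nat.one_lt_pow hk hp.one_lt⟩
  rw [Nat.card_congr (Equiv.subtypeEquivRight fun _ => isIdempotentElem_iff_of_prime_pow hp)]
  exact (Nat.card_coe_set_eq {0, 1}).trans (Set.ncard_pair zero_ne_one)

theorem card_isIdempotentElem {n : ℕ} (hn : n ≠ 0) :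
    Nat.card {e : ZMod n // IsIdempotentElem e} = 2 ^ n.primeFactors.card := by
  rw [Nat.multiplicative_factorization (fun n => Nat.card {e : ZMod n // IsIdempotentElem e})
      (fun _ _ => card_isIdempotentElem_mul)
      (Nat.card_eq_one_iff_unique.mpr ⟨inferInstance, ⟨⟨0, .zero⟩⟩⟩) hn, Finsupp.prod,
    Nat.support_factorization, ← Finset.prod_const]
  refine Finset.prod_congr rfl fun p hp => ?_
  exact card_isIdempotentElem_prime_pow (Nat.prime_of_mem_primeFactors hp)
    (Nat.support_factorization n ▸ hp |> Finsupp.mem_support_iff.mp)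

theorem four_mul_dvd_val_intCast_sq_sub_one_iff {d : ℕ} [NeZero d] (a : ℤ) :
    4 * (d : ℤ) ∣ (((a : ZMod (2 * d)).val : ℤ)) ^ 2 - 1 ↔ 4 * (d : ℤ) ∣ a ^ 2 - 1 := by
  apply Int.four_mul_dvd_sq_sub_one_iff_of_modEq
  rw [val_intCast]
  exact_mod_cast Int.mod_modEq a _

theorem intCast_two_mul_sub_one_eq_iff {d : ℕ} {t t' : ℤ} :
    ((2 * t - 1 : ℤ) : ZMod (2 * d)) = ((2 * t' - 1 : ℤ) : ZMod (2 * d)) ↔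
      (t : ZMod d) = t' := by
  rw [intCast_eq_intCast_iff_dvd_sub, intCast_eq_intCast_iff_dvd_sub,
    show 2 * t' - 1 - (2 * t - 1) = 2 * (t' - t) by ring]
  push_cast
  exact mul_dvd_mul_iff_left two_ne_zero

end ZMod

theorem card_four_mul_dvd_val_sq_sub_one_eq_card_isIdempotentElem (d : ℕ) [NeZero d] :
    Nat.card {x : ZMod (2 * d) // 4 * (d : ℤ) ∣ (x.val : ℤ) ^ 2 - 1} =
      Nat.card {e : ZMod d // IsIdempotentElem e} := by
  let f (e : {e : ZMod d // IsIdempotentElem e}) :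
      {x : ZMod (2 * d) // 4 * (d : ℤ) ∣ (x.val : ℤ) ^ 2 - 1} :=
    ⟨((2 * e.1.val - 1 : ℤ) : ZMod (2 * d)), by
      rw [ZMod.four_mul_dvd_val_intCast_sq_sub_one_iff,
        Int.four_mul_dvd_two_mul_sub_one_sq_sub_one_iff, ← ZMod.isIdempotentElem_intCast_iff]
      simpa using e.2⟩
  refine (Nat.card_eq_of_bijective f ⟨fun e e' hee' => ?_, fun ⟨x, hx⟩ => ?_⟩).symm
  · have h := ZMod.intCast_two_mul_sub_one_eq_iff.mp (congrArg Subtype.val hee')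
    exact Subtype.ext (by simpa using h)
  · obtain ⟨s, hs⟩ : Odd (x.val : ℤ) := by
      have h2 : Even ((x.val : ℤ) ^ 2 - 1) :=
        even_iff_two_dvd.mpr ((dvd_mul_of_dvd_left (by norm_num) _).trans hx)
      simpa [Int.even_sub_one, parity_simps] using h2
    have hs' : (x.val : ℤ) = 2 * (s + 1) - 1 := by rw [hs]; ring
    have he : IsIdempotentElem ((s + 1 : ℤ) : ZMod d) := by
      rwa [ZMod.isIdempotentElem_intCast_iff, ← Int.four_mul_dvd_two_mul_sub_one_sq_sub_one_iff,
        ← hs']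
    have hx' : ((2 * (s + 1) - 1 : ℤ) : ZMod (2 * d)) = x := by rw [← hs']; simp
    exact ⟨⟨_, he⟩,
      Subtype.ext <| (ZMod.intCast_two_mul_sub_one_eq_iff.mpr (by simp)).trans hx'⟩

/-- For every integer `d ≥ 1`, the number of residue classes `x`
modulo `2d` with `x² ≡ 1 (mod 4d)` is exactly `2^{ρ(d)}`, where `ρ(d)` is the number of
distinct prime divisors of `d`.  (The condition is tested on the canonical
representative `x.val`; it is independent of the choice of representative.) -/
theorem card_square_roots_of_one_mod_four_d (d : ℕ) (hd : 1 ≤ d) :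
    Nat.card {x : ZMod (2 * d) // (4 * (d : ℤ)) ∣ ((x.val : ℤ) ^ 2 - 1)} =
      2 ^ d.primeFactors.card := by
  have : NeZero d := ⟨by omega⟩
  rw [card_four_mul_dvd_val_sq_sub_one_eq_card_isIdempotentElem,
    ZMod.card_isIdempotentElem (NeZero.ne d)]
end

section
/- For every integer m ≥ 1, the Bernoulli numbers satisfy |B_{4m+2} / B_{8m+4}| < (5/(4√2)) · (πe/(2m+1))^{4m+2} · 1/2^{8m+4}. -/
open Real Nat

noncomputable def Zb (k : ℕ) : ℝ :=
  (-1 : ℝ) ^ (k + 1) * (2 : ℝ) ^ (2 * k - 1) * π ^ (2 * k) *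
    ((bernoulli (2 * k) : ℚ) : ℝ) / ((2 * k)! : ℝ)

lemma Zb_hasSum {k : ℕ} (hk : k ≠ 0) :
    HasSum (fun n : ℕ => 1 / (n : ℝ) ^ (2 * k)) (Zb k) := by
  unfold Zb; exact hasSum_zeta_nat hk

lemma one_le_Zb {k : ℕ} (hk : k ≠ 0) : 1 ≤ Zb k := by
  have h := le_hasSum (Zb_hasSum hk) 1 (fun j _ => by positivity)
  simpa using h

lemma Zb_le_Zb_three {k : ℕ} (hk : 3 ≤ k) : Zb k ≤ Zb 3 := by
  refine hasSum_le (fun j => ?_) (Zb_hasSum (by omega)) (Zb_hasSum (by norm_num))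
  rcases Nat.eq_zero_or_pos j with rfl | hj
  · rw [Nat.cast_zero, zero_pow (by omega : 2 * k ≠ 0), zero_pow (by norm_num : 2 * 3 ≠ 0)]
  · have h1 : (1:ℝ) ≤ (j:ℝ) := by exact_mod_cast hj
    apply one_div_le_one_div_of_le (by positivity)
    exact pow_le_pow_right₀ h1 (by omega)

lemma Zb_three : Zb 3 = π ^ 6 / 945 := by
  have c52 : Nat.choose 5 2 = 10 := by decide
  have c62 : Nat.choose 6 2 = 15 := by decide
  have c64 : Nat.choose 6 4 = 15 := by decide
  have h5 : bernoulli' 5 = 0 := by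
    rw [bernoulli'_def]; norm_num [Finset.sum_range_succ, c52]
  have h6 : bernoulli 6 = 1 / 42 := by
    rw [bernoulli_eq_bernoulli'_of_ne_one (by norm_num), bernoulli'_def]
    norm_num [Finset.sum_range_succ, h5, c62, c64]
  rw [Zb, h6]
  norm_num [Nat.factorial]
  ring

lemma abs_bern (k : ℕ) (hk : k ≠ 0) :
    |((bernoulli (2 * k) : ℚ) : ℝ)| =
      Zb k * ((2 * k)! : ℝ) * 2 / (2 ^ (2 * k) * π ^ (2 * k)) := by
  have hf : (((2 * k)! : ℕ) : ℝ) ≠ 0 := by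
    exact_mod_cast (Nat.factorial_pos _).ne'
  have hz : 0 ≤ Zb k := le_trans zero_le_one (one_le_Zb hk)
  have h1 : Zb k * ((2 * k)! : ℝ) =
      (-1 : ℝ) ^ (k + 1) * (2 : ℝ) ^ (2 * k - 1) * π ^ (2 * k) *
        ((bernoulli (2 * k) : ℚ) : ℝ) := by
    rw [Zb]; field_simp
  have h2 : |Zb k * (((2 * k)! : ℕ) : ℝ)| = Zb k * ((2 * k)! : ℝ) :=
    abs_of_nonneg (mul_nonneg hz (by positivity))
  have hneg : |(-1 : ℝ) ^ (k + 1)| = 1 := by rw [abs_pow]; norm_num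
  have h3 : Zb k * ((2 * k)! : ℝ) =
      (2 : ℝ) ^ (2 * k - 1) * π ^ (2 * k) * |((bernoulli (2 * k) : ℚ) : ℝ)| := by
    rw [← h2, h1, abs_mul, abs_mul, abs_mul, hneg, one_mul,
      abs_of_nonneg (by positivity : (0:ℝ) ≤ (2 : ℝ) ^ (2 * k - 1)),
      abs_of_nonneg (by positivity : (0:ℝ) ≤ π ^ (2 * k))]
  have hp : (2 : ℝ) ^ (2 * k) = 2 ^ (2 * k - 1) * 2 := by
    rw [← pow_succ]; congr 1; omega
  rw [hp, eq_div_iff (by positivity)]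
  linear_combination (-2 : ℝ) * h3

lemma sqrt_pi_le_stirling (k : ℕ) (hk : 1 ≤ k) : Real.sqrt π ≤ Stirling.stirlingSeq k := by
  obtain ⟨j, rfl⟩ := Nat.exists_eq_add_of_le hk
  have h : Filter.Tendsto (Stirling.stirlingSeq ∘ Nat.succ) Filter.atTop (nhds (Real.sqrt π)) :=
    Stirling.tendsto_stirlingSeq_sqrt_pi.comp (Filter.tendsto_add_atTop_nat 1)
  simpa [Nat.add_comm] using Stirling.stirlingSeq'_antitone.le_of_tendsto h j

lemma stirling_le (k : ℕ) (hk : 1 ≤ k) :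
    Stirling.stirlingSeq k ≤ Real.exp 1 / Real.sqrt 2 := by
  obtain ⟨j, rfl⟩ := Nat.exists_eq_add_of_le hk
  have := Stirling.stirlingSeq'_antitone (Nat.zero_le j)
  simpa [Function.comp, Nat.add_comm, Stirling.stirlingSeq_one] using this

lemma factorial_upper (j : ℕ) (hj : 1 ≤ j) :
    (j ! : ℝ) ≤ Real.exp 1 / Real.sqrt 2 *
      (Real.sqrt (2 * (j : ℝ)) * ((j : ℝ) / Real.exp 1) ^ j) := by
  have hj' : (0:ℝ) < (j : ℝ) := by exact_mod_cast hj
  have hpos : 0 < Real.sqrt (2 * (j : ℝ)) * ((j : ℝ) / Real.exp 1) ^ j := by positivity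
  have h := stirling_le j hj
  rw [Stirling.stirlingSeq, div_le_iff₀ hpos] at h
  linarith [h]

lemma factorial_lower (j : ℕ) (hj : 1 ≤ j) :
    Real.sqrt π * (Real.sqrt (2 * (j : ℝ)) * ((j : ℝ) / Real.exp 1) ^ j) ≤ (j ! : ℝ) := by
  have hj' : (0:ℝ) < (j : ℝ) := by exact_mod_cast hj
  have hpos : 0 < Real.sqrt (2 * (j : ℝ)) * ((j : ℝ) / Real.exp 1) ^ j := by positivity
  have h := sqrt_pi_le_stirling j hj
  rw [Stirling.stirlingSeq, le_div_iff₀ hpos] at h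
  linarith [h]

lemma pow_ratio (K E : ℝ) (hK : K ≠ 0) (hE : E ≠ 0) (k : ℕ) :
    (2 * K / E) ^ (2 * k) / (2 * (2 * K) / E) ^ (2 * (2 * k)) =
      (E / K) ^ (2 * k) * (1 / 2 ^ (6 * k)) := by
  have h1 : (2 * (2 * K) / E) ^ (2 * (2 * k)) = ((2 * (2 * K) / E) ^ 2) ^ (2 * k) :=
    pow_mul _ 2 (2 * k)
  have h2 : (2 : ℝ) ^ (6 * k) = ((2:ℝ) ^ 3) ^ (2 * k) := by
    rw [← pow_mul]; congr 1; ring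
  rw [h1, h2, ← div_pow, one_div, ← inv_pow, ← mul_pow]
  congr 1
  field_simp

lemma fact_ratio (k : ℕ) (hk : 1 ≤ k) :
    ((2 * k)! : ℝ) / ((2 * (2 * k))! : ℝ) ≤
      Real.exp 1 / (2 * Real.sqrt π) *
        ((Real.exp 1 / (k : ℝ)) ^ (2 * k) * (1 / 2 ^ (6 * k))) := by
  have hK : (0:ℝ) < (k : ℝ) := by exact_mod_cast hk
  have hup := factorial_upper (2 * k) (by omega)
  have hlow := factorial_lower (2 * (2 * k)) (by omega)
  have hcast1 : ((2 * k : ℕ) : ℝ) = 2 * (k : ℝ) := by push_cast; ring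
  have hcast2 : ((2 * (2 * k) : ℕ) : ℝ) = 2 * (2 * (k : ℝ)) := by push_cast; ring
  rw [hcast1] at hup
  rw [hcast2] at hlow
  have hD : (0:ℝ) < Real.sqrt π *
      (Real.sqrt (2 * (2 * (2 * (k:ℝ)))) * ((2 * (2 * (k:ℝ))) / Real.exp 1) ^ (2 * (2 * k))) := by
    positivity
  have h1 : ((2 * k)! : ℝ) / ((2 * (2 * k))! : ℝ) ≤
      (Real.exp 1 / Real.sqrt 2 *
        (Real.sqrt (2 * (2 * (k:ℝ))) * ((2 * (k:ℝ)) / Real.exp 1) ^ (2 * k))) /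
      (Real.sqrt π *
        (Real.sqrt (2 * (2 * (2 * (k:ℝ)))) * ((2 * (2 * (k:ℝ))) / Real.exp 1) ^ (2 * (2 * k)))) :=
    div_le_div₀ (by positivity) hup hD hlow
  refine h1.trans_eq ?_
  have h8 : Real.sqrt (2 * (2 * (2 * (k:ℝ)))) =
      Real.sqrt 2 * Real.sqrt (2 * (2 * (k:ℝ))) :=
    Real.sqrt_mul (by norm_num) _
  have hs2 : Real.sqrt 2 * Real.sqrt 2 = 2 := Real.mul_self_sqrt (by norm_num)
  have hdiv : Real.exp 1 / Real.sqrt 2 = Real.exp 1 * Real.sqrt 2 / 2 := by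
    rw [div_eq_div_iff (Real.sqrt_ne_zero'.mpr (by norm_num)) (by norm_num), mul_assoc, hs2]
  have hA : (0:ℝ) < Real.sqrt (2 * (2 * (k:ℝ))) := Real.sqrt_pos.mpr (by positivity)
  have hQ : (0:ℝ) < ((2 * (2 * (k:ℝ))) / Real.exp 1) ^ (2 * (2 * k)) := by positivity
  rw [h8, hdiv]
  have key := pow_ratio (k:ℝ) (Real.exp 1) hK.ne' (Real.exp_ne_zero 1) k
  rw [← key]
  have hsπ : (0:ℝ) < Real.sqrt π := Real.sqrt_pos.mpr Real.pi_pos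
  field_simp

lemma const_lt : π ^ 6 / 945 * (Real.exp 1 / (2 * Real.sqrt π)) < 5 / (4 * Real.sqrt 2) := by
  have hπu : π < 3.1416 := by linarith [Real.pi_lt_d6]
  have hπl : 3.1415 < π := by linarith [Real.pi_gt_d6]
  have he : Real.exp 1 < 2.7182818286 := Real.exp_one_lt_d9
  have he0 : (0:ℝ) < Real.exp 1 := Real.exp_pos 1
  have hs2 : Real.sqrt 2 < 1.41422 := by
    rw [show (1.41422:ℝ) = Real.sqrt (1.41422^2) from (Real.sqrt_sq (by norm_num)).symm]
    exact Real.sqrt_lt_sqrt (by norm_num) (by norm_num)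
  have hs2' : (0:ℝ) < Real.sqrt 2 := Real.sqrt_pos.mpr (by norm_num)
  have hsπ : (1.772:ℝ) < Real.sqrt π := by
    rw [show (1.772:ℝ) = Real.sqrt (1.772^2) from (Real.sqrt_sq (by norm_num)).symm]
    exact Real.sqrt_lt_sqrt (by norm_num) (by nlinarith)
  calc π ^ 6 / 945 * (Real.exp 1 / (2 * Real.sqrt π))
      ≤ (3.1416:ℝ) ^ 6 / 945 * (2.7182818286 / (2 * 1.772)) := by
        gcongr <;> norm_num [Real.pi_pos.le]
      _ < 5 / (4 * 1.41422) := by norm_num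
      _ ≤ 5 / (4 * Real.sqrt 2) := by
        apply div_le_div_of_nonneg_left (by norm_num) (by positivity)
        nlinarith [hs2]

/-- For every integer `m ≥ 1`,
`|B_{4m+2}/B_{8m+4}| < (5/(4√2)) · (πe/(2m+1))^{4m+2} · 1/2^{8m+4}`. -/
theorem bernoulli_quotient_bound (m : ℕ) (hm : 1 ≤ m) :
    |((bernoulli (4 * m + 2) : ℚ) : ℝ) / ((bernoulli (8 * m + 4) : ℚ) : ℝ)| <
      5 / (4 * Real.sqrt 2) * ((π * Real.exp 1) / (2 * (m : ℝ) + 1)) ^ (4 * m + 2) *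
        (1 / 2 ^ (8 * m + 4)) := by
  set k := 2 * m + 1 with hkdef
  have hk0 : k ≠ 0 := by omega
  have hk1 : 1 ≤ k := by omega
  have hk3 : 3 ≤ k := by omega
  have h2k0 : 2 * k ≠ 0 := by omega
  have hK : (0:ℝ) < (k : ℝ) := by exact_mod_cast hk1
  have e1 : 4 * m + 2 = 2 * k := by omega
  have e2 : 8 * m + 4 = 2 * (2 * k) := by omega
  have e3 : 2 * (m : ℝ) + 1 = (k : ℝ) := by rw [hkdef]; push_cast; ring
  rw [e1, e2, e3, abs_div, abs_bern k hk0, abs_bern (2 * k) h2k0]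
  have hZ2 : 1 ≤ Zb (2 * k) := one_le_Zb h2k0
  have hZk : 0 ≤ Zb k := le_trans zero_le_one (one_le_Zb hk0)
  have hz2 : Zb (2 * k) ≠ 0 := by linarith
  have hfac1 : (0:ℝ) < ((2 * k)! : ℝ) := Nat.cast_pos.mpr (Nat.factorial_pos _)
  have hfac2 : (0:ℝ) < ((2 * (2 * k))! : ℝ) := Nat.cast_pos.mpr (Nat.factorial_pos _)
  have step1 : Zb k * ((2 * k)! : ℝ) * 2 / (2 ^ (2 * k) * π ^ (2 * k)) /
      (Zb (2 * k) * ((2 * (2 * k))! : ℝ) * 2 / (2 ^ (2 * (2 * k)) * π ^ (2 * (2 * k)))) =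
      Zb k / Zb (2 * k) * (((2 * k)! : ℝ) / ((2 * (2 * k))! : ℝ)) *
        (2 ^ (2 * k) * π ^ (2 * k)) := by
    field_simp
    ring
  rw [step1]
  have hZr : Zb k / Zb (2 * k) ≤ π ^ 6 / 945 :=
    (div_le_self hZk hZ2).trans (Zb_three ▸ Zb_le_Zb_three hk3)
  have hF := fact_ratio k hk1
  have hsπ : (0:ℝ) < Real.sqrt π := Real.sqrt_pos.mpr Real.pi_pos
  calc Zb k / Zb (2 * k) * (((2 * k)! : ℝ) / ((2 * (2 * k))! : ℝ)) *
        (2 ^ (2 * k) * π ^ (2 * k))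
      ≤ π ^ 6 / 945 * (Real.exp 1 / (2 * Real.sqrt π) *
          ((Real.exp 1 / (k : ℝ)) ^ (2 * k) * (1 / 2 ^ (6 * k)))) *
        (2 ^ (2 * k) * π ^ (2 * k)) := by
        gcongr
      _ = π ^ 6 / 945 * (Real.exp 1 / (2 * Real.sqrt π)) *
          ((π * Real.exp 1 / (k : ℝ)) ^ (2 * k) * (1 / 2 ^ (2 * (2 * k)))) := by
        have hKne : (k:ℝ) ≠ 0 := hK.ne'
        generalize Real.exp 1 = E
        field_simp
        ring
      _ < 5 / (4 * Real.sqrt 2) *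
          ((π * Real.exp 1 / (k : ℝ)) ^ (2 * k) * (1 / 2 ^ (2 * (2 * k)))) := by
        apply mul_lt_mul_of_pos_right const_lt
        positivity
      _ = 5 / (4 * Real.sqrt 2) * (π * Real.exp 1 / (k : ℝ)) ^ (2 * k) *
          (1 / 2 ^ (2 * (2 * k))) := by ring
end

section
/- For every integer m ≥ 5, the Bernoulli number B_{4m+2} (which is positive) satisfies B_{4m+2}/(4m+2) > (1 + 1/(4m−10))^{8m+2} − 1. -/
/-!
Euler's formula `ζ(2k) = (-1)^(k+1) (2π)^(2k) B_{2k} / (2 (2k)!)` together with `ζ(2k) ≥ 1` gives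
`B_{4m+2} / (4m+2) ≥ 2 (4m+1)! / (2π)^(4m+2)`, and the right-hand side increases with `m`, so for
`m ≥ 5` it is at least `2 · 21! / (2π)^22 > 149`. On the other side
`(1 + 1/(4m-10))^(8m+2) ≤ exp ((8m+2)/(4m-10)) ≤ e^5 < 149`.
-/

open Real Nat

theorem two_mul_factorial_le_bernoulli {k : ℕ} (hk : k ≠ 0) :
    2 * ((2 * k)! : ℝ) ≤ (-1) ^ (k + 1) * (2 * π) ^ (2 * k) * (bernoulli (2 * k) : ℝ) := by
  have hζ : 1 ≤ (-1 : ℝ) ^ (k + 1) * 2 ^ (2 * k - 1) * π ^ (2 * k) * bernoulli (2 * k) /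
      (2 * k)! := by
    simpa using le_hasSum (hasSum_zeta_nat hk) 1 fun i _ => by positivity
  have h2 : (2 : ℝ) ^ (2 * k) = 2 * 2 ^ (2 * k - 1) := (mul_pow_sub_one (by omega) 2).symm
  rw [one_le_div (by positivity)] at hζ
  rw [mul_pow, h2]
  linarith

theorem two_mul_factorial_le_bernoulli_four_mul_add_two (m : ℕ) :
    2 * ((4 * m + 2)! : ℝ) ≤ (2 * π) ^ (4 * m + 2) * (bernoulli (4 * m + 2) : ℝ) := by
  have h := two_mul_factorial_le_bernoulli (k := 2 * m + 1) (by omega)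
  rwa [show 2 * (2 * m + 1) = 4 * m + 2 by ring, show 2 * m + 1 + 1 = 2 * (m + 1) by ring,
    pow_mul, neg_one_sq, one_pow, one_mul] at h

theorem factorial_mul_pow_le_factorial_add {x : ℝ} {n : ℕ} (hx₀ : 0 ≤ x) (hx : x ≤ n + 1)
    (k : ℕ) : (n ! : ℝ) * x ^ k ≤ (n + k)! := by
  calc (n ! : ℝ) * x ^ k ≤ n ! * ((n + 1 : ℕ) : ℝ) ^ k := by gcongr; exact_mod_cast hx
    _ ≤ (n + k)! := by exact_mod_cast Nat.factorial_mul_pow_le_factorial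

theorem one_add_pow_le_exp_mul {x : ℝ} (hx : 0 ≤ 1 + x) (n : ℕ) :
    (1 + x) ^ n ≤ exp (n * x) := by
  rw [exp_nat_mul]
  exact pow_le_pow_left₀ hx (by linarith [add_one_le_exp x]) n

theorem exp_five_lt : exp 5 < 149 :=
  calc exp 5 = exp 1 ^ 5 := by rw [← exp_nat_mul]; norm_num
    _ < 2.7182818286 ^ 5 := by gcongr; exact exp_one_lt_d9
    _ < 149 := by norm_num

theorem mul_two_pi_pow_lt_two_mul_factorial : 149 * (2 * π) ^ 22 < 2 * (21 ! : ℝ) :=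
  calc 149 * (2 * π) ^ 22 < 149 * 6.3 ^ 22 := by gcongr; linarith [pi_lt_d2]
    _ < 2 * (21 ! : ℝ) := by norm_num [Nat.factorial]

theorem exp_five_lt_bernoulli_div {m : ℕ} (hm : 5 ≤ m) :
    exp 5 < (bernoulli (4 * m + 2) : ℝ) / (4 * m + 2) := by
  obtain ⟨k, rfl⟩ : ∃ k, m = k + 5 := ⟨m - 5, by omega⟩
  have hfac := factorial_mul_pow_le_factorial_add (n := 21) (x := 2 * π) (by positivity)
    (by norm_num; linarith [pi_lt_d2]) (4 * k)
  have hB := two_mul_factorial_le_bernoulli_four_mul_add_two (k + 5)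
  have hsucc : ((4 * (k + 5) + 2)! : ℝ) = (4 * (k + 5 : ℕ) + 2) * (21 + 4 * k)! := by
    rw [show 4 * (k + 5) + 2 = (21 + 4 * k) + 1 by ring, Nat.factorial_succ]; push_cast; ring
  have hpow : (2 * π) ^ (4 * (k + 5) + 2) = (2 * π) ^ 22 * (2 * π) ^ (4 * k) := by
    rw [← pow_add]; ring_nf
  rw [lt_div_iff₀ (by positivity)]
  refine lt_of_mul_lt_mul_right ?_ (by positivity : (0 : ℝ) ≤ (2 * π) ^ (4 * (k + 5) + 2))
  calc exp 5 * (4 * (k + 5 : ℕ) + 2) * (2 * π) ^ (4 * (k + 5) + 2)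
      = (4 * (k + 5 : ℕ) + 2) * (2 * π) ^ (4 * k) * (exp 5 * (2 * π) ^ 22) := by rw [hpow]; ring
    _ < (4 * (k + 5 : ℕ) + 2) * (2 * π) ^ (4 * k) * (2 * 21 !) := by
        refine mul_lt_mul_of_pos_left ?_ (by positivity)
        exact (mul_lt_mul_of_pos_right exp_five_lt (by positivity)).trans
          mul_two_pi_pow_lt_two_mul_factorial
    _ = 2 * ((4 * (k + 5 : ℕ) + 2) * (21 ! * (2 * π) ^ (4 * k))) := by ring
    _ ≤ 2 * ((4 * (k + 5 : ℕ) + 2) * (21 + 4 * k)!) := by gcongr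
    _ = 2 * ((4 * (k + 5) + 2)! : ℝ) := by rw [hsucc]
    _ ≤ bernoulli (4 * (k + 5) + 2) * (2 * π) ^ (4 * (k + 5) + 2) := by linarith

theorem one_add_inv_pow_le_exp_five {m : ℕ} (hm : 5 ≤ m) :
    (1 + 1 / (4 * (m : ℝ) - 10)) ^ (8 * m + 2) ≤ exp 5 := by
  have hm' : (5 : ℝ) ≤ m := by exact_mod_cast hm
  have hpos : (0 : ℝ) < 4 * m - 10 := by linarith
  calc (1 + 1 / (4 * (m : ℝ) - 10)) ^ (8 * m + 2)
      ≤ exp ((8 * m + 2 : ℕ) * (1 / (4 * (m : ℝ) - 10))) :=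
        one_add_pow_le_exp_mul (by positivity) _
    _ ≤ exp 5 := by
        gcongr
        rw [mul_one_div, div_le_iff₀ hpos]
        push_cast
        linarith

/-- For every integer `m ≥ 5`, the Bernoulli number `B_{4m+2}` (which
is positive) satisfies `B_{4m+2}/(4m+2) > (1 + 1/(4m−10))^{8m+2} − 1`. -/
theorem bernoulli_obstruction_inequality (m : ℕ) (hm : 5 ≤ m) :
    0 < ((bernoulli (4 * m + 2) : ℚ) : ℝ) ∧
      ((bernoulli (4 * m + 2) : ℚ) : ℝ) / (4 * (m : ℝ) + 2) >
        (1 + 1 / (4 * (m : ℝ) - 10)) ^ (8 * m + 2) - 1 := by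
  have hB := exp_five_lt_bernoulli_div hm
  refine ⟨(div_pos_iff_of_pos_right (by positivity)).1 ((exp_pos 5).trans hB), ?_⟩
  linarith [one_add_inv_pow_le_exp_five hm]
end

section
/- For every integer m ≥ 5, the following inequality of real numbers holds: (1 + 1/(4m−7))^{8m+3} · (5/(8√2)) · (πe/(2m+1))^{4m+2} · (2^{8m+3} + 2^{4m+5/2} + 1)/2^{8m+3} < 1. -/
open Real

/-- For every integer `m ≥ 5`,
`(1 + 1/(4m−7))^{8m+3} · (5/(8√2)) · (πe/(2m+1))^{4m+2} ·
  (2^{8m+3} + 2^{4m+5/2} + 1)/2^{8m+3} < 1`,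
where `2^{4m+5/2} = 2^{4m+2}·√2`. -/
theorem beta_inequality (m : ℕ) (hm : 5 ≤ m) :
    (1 + 1 / (4 * (m : ℝ) - 7)) ^ (8 * m + 3) * (5 / (8 * Real.sqrt 2)) *
        ((π * Real.exp 1) / (2 * (m : ℝ) + 1)) ^ (4 * m + 2) *
        ((2 ^ (8 * m + 3) + 2 ^ (4 * m + 2) * Real.sqrt 2 + 1) / 2 ^ (8 * m + 3)) < 1 := by
  have hm' : (5:ℝ) ≤ (m:ℝ) := by exact_mod_cast hm
  have hden : (0:ℝ) < 4 * (m:ℝ) - 7 := by linarith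
  have hsqrt2 : Real.sqrt 2 ^ 2 = 2 := Real.sq_sqrt (by norm_num)
  have hsqnn : (0:ℝ) ≤ Real.sqrt 2 := Real.sqrt_nonneg 2
  have hs_le : Real.sqrt 2 ≤ 2 := by nlinarith
  have hs_ge : (11:ℝ)/8 ≤ Real.sqrt 2 := by nlinarith
  -- Factor 1 bound
  have h1 : (1 + 1 / (4 * (m : ℝ) - 7)) ^ (8 * m + 3) ≤ Real.exp 4 := by
    have step : (1 + 1 / (4 * (m : ℝ) - 7)) ^ (8 * m + 3)
        ≤ Real.exp (1 / (4 * (m:ℝ) - 7)) ^ (8 * m + 3) := by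
      apply pow_le_pow_left₀ (by positivity)
      have := Real.add_one_le_exp (1 / (4 * (m:ℝ) - 7))
      linarith
    refine step.trans ?_
    rw [← Real.exp_nat_mul]
    apply Real.exp_le_exp.mpr
    rw [mul_one_div, div_le_iff₀ hden]
    push_cast
    linarith
  -- Factor 2 bound
  have h2 : 5 / (8 * Real.sqrt 2) ≤ (5:ℝ) / 11 := by
    apply div_le_div_of_nonneg_left (by norm_num) (by norm_num)
    linarith
  -- Factor 3 bound
  have h3 : ((π * Real.exp 1) / (2 * (m : ℝ) + 1)) ^ (4 * m + 2) ≤ (0.78:ℝ) ^ 22 := by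
    have hbase : (π * Real.exp 1) / (2 * (m:ℝ) + 1) ≤ 0.78 := by
      rw [div_le_iff₀ (by linarith)]
      have hpi : π < 3.15 := Real.pi_lt_d2
      have he : Real.exp 1 < 2.7182818286 := Real.exp_one_lt_d9
      nlinarith [Real.exp_pos 1, Real.pi_pos]
    have hbnn : (0:ℝ) ≤ (π * Real.exp 1) / (2 * (m:ℝ) + 1) := by positivity
    calc ((π * Real.exp 1) / (2 * (m : ℝ) + 1)) ^ (4 * m + 2)
        ≤ (0.78:ℝ) ^ (4 * m + 2) := pow_le_pow_left₀ hbnn hbase _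
      _ ≤ (0.78:ℝ) ^ 22 := pow_le_pow_of_le_one (by norm_num) (by norm_num) (by omega)
  -- Factor 4 bound
  have h4 : ((2:ℝ) ^ (8 * m + 3) + 2 ^ (4 * m + 2) * Real.sqrt 2 + 1) / 2 ^ (8 * m + 3) ≤ 2 := by
    rw [div_le_iff₀ (by positivity)]
    have e1 : (2:ℝ) ^ (4 * m + 2) * Real.sqrt 2 ≤ 2 ^ (4 * m + 3) := by
      rw [pow_succ]
      exact mul_le_mul_of_nonneg_left hs_le (by positivity)
    have e2 : (2:ℝ) ^ (4 * m + 3) ≤ 2 ^ (8 * m + 2) :=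
      pow_le_pow_right₀ one_le_two (by omega)
    have e3 : (1:ℝ) ≤ 2 ^ (8 * m + 2) := by simpa using pow_le_pow_right₀ one_le_two (Nat.zero_le (8*m+2))
    have e4 : (2:ℝ) ^ (8 * m + 3) = 2 ^ (8 * m + 2) * 2 := pow_succ 2 _
    nlinarith [pow_pos (show (0:ℝ) < 2 by norm_num) (8 * m + 2)]
  -- Combine
  have key : (1 + 1 / (4 * (m : ℝ) - 7)) ^ (8 * m + 3) * (5 / (8 * Real.sqrt 2)) *
        ((π * Real.exp 1) / (2 * (m : ℝ) + 1)) ^ (4 * m + 2) *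
        ((2 ^ (8 * m + 3) + 2 ^ (4 * m + 2) * Real.sqrt 2 + 1) / 2 ^ (8 * m + 3))
      ≤ Real.exp 4 * ((5:ℝ)/11) * (0.78:ℝ) ^ 22 * 2 := by
    have p1 : (0:ℝ) ≤ (1 + 1 / (4 * (m : ℝ) - 7)) ^ (8 * m + 3) := by positivity
    have p2 : (0:ℝ) ≤ 5 / (8 * Real.sqrt 2) := by positivity
    have p3 : (0:ℝ) ≤ ((π * Real.exp 1) / (2 * (m : ℝ) + 1)) ^ (4 * m + 2) := by positivity
    have p4 : (0:ℝ) ≤ ((2:ℝ) ^ (8 * m + 3) + 2 ^ (4 * m + 2) * Real.sqrt 2 + 1) / 2 ^ (8 * m + 3) := by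
      positivity
    gcongr <;> first | positivity | norm_num
  refine key.trans_lt ?_
  have hexp : Real.exp 4 ≤ (2.7182818286:ℝ) ^ 4 := by
    have : Real.exp 4 = Real.exp 1 ^ 4 := by
      rw [← Real.exp_nat_mul]; norm_num
    rw [this]
    exact pow_le_pow_left₀ (Real.exp_pos 1).le Real.exp_one_lt_d9.le 4
  calc Real.exp 4 * ((5:ℝ)/11) * (0.78:ℝ) ^ 22 * 2
      ≤ (2.7182818286:ℝ) ^ 4 * ((5:ℝ)/11) * (0.78:ℝ) ^ 22 * 2 := by gcongr <;> norm_num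
    _ < 1 := by norm_num
end
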